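/- arXiv:1410.3400 — 2 statements merged into one kernel-verified Lean document; each statement's English description precedes it below -/
import Mathlib

section
/- If Ω is a bounded subset of a Banach space X, then the Hausdorff measure of noncompactness satisfies β(conv Ω) = β(Ω) = β(closure Ω). -/
/-!
Since `Ω` lies in both `convexHull ℝ Ω` and `closure Ω`, every radius admissible for them is
admissible for `Ω`; conversely a finite `r`-net of `Ω` yields, for each `r' > r`, a finite
`r'`-net of either set. So the sets of admissible radii have the same infimum.
-/

open Metric

/-- Hausdorff measure of noncompactness: infimum of radii `r > 0` such that
`Ω` can be covered by finitely many balls of radius `r`. -/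
noncomputable def hausdorffMNC {X : Type*} [NormedAddCommGroup X] (Ω : Set X) : ℝ :=
  sInf {r : ℝ | 0 < r ∧ ∃ s : Finset X, Ω ⊆ ⋃ x ∈ s, Metric.ball x r}

theorem csInf_eq_of_subset_of_forall_lt {α : Type*} [ConditionallyCompleteLinearOrder α]
    [DenselyOrdered α] [NoMaxOrder α] {A B : Set α} (hB : BddBelow B) (hAB : A ⊆ B)
    (hA : ∀ b ∈ B, ∀ c, b < c → c ∈ A) : sInf A = sInf B := by
  obtain rfl | ⟨b, hb⟩ := B.eq_empty_or_nonempty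
  · rw [Set.subset_empty_iff.1 hAB]
  obtain ⟨c, hbc⟩ := exists_gt b
  have hAne : A.Nonempty := ⟨c, hA b hb c hbc⟩
  refine le_antisymm ?_ (csInf_le_csInf hB hAne hAB)
  refine le_csInf ⟨b, hb⟩ fun b hb => le_of_forall_gt_imp_ge_of_dense fun c hc => ?_
  exact csInf_le (hB.mono hAB) (hA b hb c hc)

section BallCoverRadii

variable {X : Type*} [PseudoMetricSpace X]

def ballCoverRadii (Ω : Set X) : Set ℝ :=
  {r : ℝ | 0 < r ∧ ∃ s : Finset X, Ω ⊆ ⋃ x ∈ s, ball x r}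

theorem mem_ballCoverRadii_iff {Ω : Set X} {r : ℝ} :
    r ∈ ballCoverRadii Ω ↔ 0 < r ∧ ∃ s : Finset X, Ω ⊆ thickening r (s : Set X) := by
  simp only [ballCoverRadii, Set.mem_ofPred_eq, thickening_eq_biUnion_ball, Finset.mem_coe]

theorem bddBelow_ballCoverRadii (Ω : Set X) : BddBelow (ballCoverRadii Ω) :=
  ⟨0, fun _ hr => hr.1.le⟩

theorem ballCoverRadii_anti {Ω Ω' : Set X} (h : Ω ⊆ Ω') :
    ballCoverRadii Ω' ⊆ ballCoverRadii Ω :=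
  fun _ ⟨hr, s, hs⟩ => ⟨hr, s, h.trans hs⟩

theorem mem_ballCoverRadii_closure {Ω : Set X} {r r' : ℝ} (hr : r ∈ ballCoverRadii Ω)
    (hrr' : r < r') : r' ∈ ballCoverRadii (closure Ω) := by
  obtain ⟨hr0, s, hs⟩ := mem_ballCoverRadii_iff.1 hr
  have hr'0 : 0 < r' := hr0.trans hrr'
  refine mem_ballCoverRadii_iff.2 ⟨hr'0, s, ?_⟩
  calc closure Ω ⊆ closure (thickening r (s : Set X)) := closure_mono hs
    _ ⊆ cthickening r (s : Set X) := closure_thickening_subset_cthickening r _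
    _ ⊆ thickening r' (s : Set X) := cthickening_subset_thickening' hr'0 hrr' _

end BallCoverRadii

/-- A finite `r`-net of `Ω` gives a compact `r`-net `convexHull s` of `convexHull Ω`, since
thickenings of convex sets are convex; a finite `(r' - r)`-net of that compact set finishes. -/
theorem mem_ballCoverRadii_convexHull {X : Type*} [NormedAddCommGroup X] [NormedSpace ℝ X]
    {Ω : Set X} {r r' : ℝ} (hr : r ∈ ballCoverRadii Ω) (hrr' : r < r') :
    r' ∈ ballCoverRadii (convexHull ℝ Ω) := by
  obtain ⟨hr0, s, hs⟩ := mem_ballCoverRadii_iff.1 hr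
  have hε : 0 < r' - r := sub_pos.2 hrr'
  have hconv : convexHull ℝ Ω ⊆ thickening r (convexHull ℝ (s : Set X)) :=
    convexHull_min (hs.trans (thickening_subset_of_subset r (subset_convexHull ℝ _)))
      ((convex_convexHull ℝ _).thickening r)
  obtain ⟨t, -, ht⟩ := (s.finite_toSet.isCompact_convexHull (𝕜 := ℝ)).elim_nhds_subcover
    (fun x => ball x (r' - r)) fun x _ => ball_mem_nhds x hε
  replace ht : convexHull ℝ (s : Set X) ⊆ thickening (r' - r) (t : Set X) := by
    simpa only [thickening_eq_biUnion_ball, Finset.mem_coe] using ht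
  refine mem_ballCoverRadii_iff.2 ⟨hr0.trans hrr', t, ?_⟩
  calc convexHull ℝ Ω ⊆ thickening r (thickening (r' - r) (t : Set X)) :=
        hconv.trans (thickening_subset_of_subset r ht)
    _ = thickening r' (t : Set X) := by rw [thickening_thickening hr0 hε, add_sub_cancel]

theorem hausdorffMNC_eq_of_subset_of_forall_lt {X : Type*} [NormedAddCommGroup X]
    {Ω Ω' : Set X} (h : Ω ⊆ Ω')
    (h' : ∀ r ∈ ballCoverRadii Ω, ∀ r', r < r' → r' ∈ ballCoverRadii Ω') :
    hausdorffMNC Ω' = hausdorffMNC Ω :=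
  csInf_eq_of_subset_of_forall_lt (bddBelow_ballCoverRadii Ω) (ballCoverRadii_anti h) h'

theorem mnc_convexHull_closure_general {X : Type*} [NormedAddCommGroup X] [NormedSpace ℝ X]
    (Ω : Set X) :
    hausdorffMNC (convexHull ℝ Ω) = hausdorffMNC Ω ∧
      hausdorffMNC (closure Ω) = hausdorffMNC Ω :=
  ⟨hausdorffMNC_eq_of_subset_of_forall_lt (subset_convexHull ℝ Ω) fun _ hr _ =>
      mem_ballCoverRadii_convexHull hr,
    hausdorffMNC_eq_of_subset_of_forall_lt subset_closure fun _ hr _ =>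
      mem_ballCoverRadii_closure hr⟩

theorem mnc_convexHull_closure {X : Type*} [NormedAddCommGroup X] [NormedSpace ℝ X]
    [CompleteSpace X] (Ω : Set X) (hΩ : Bornology.IsBounded Ω) :
    hausdorffMNC (convexHull ℝ Ω) = hausdorffMNC Ω ∧
      hausdorffMNC (closure Ω) = hausdorffMNC Ω :=
  mnc_convexHull_closure_general Ω
end

section
/- Let vₙ → v₀ in L²(ℝᴺ) with vₙ(x) → v₀(x) a.e. and |vₙ(x)| ≤ k(x) a.e. for some k ∈ L¹(ℝᴺ) ∩ L²(ℝᴺ), let f : ℝᴺ × ℝ → ℝ be continuous and bounded, and let μₙ → +∞. Then liminf_{n→∞} ∫_{ℝᴺ} f(x, μₙ vₙ(x)) vₙ(x) dx ≥ ∫_{{v₀>0}} f̌₊(x) v₀(x) dx + ∫_{{v₀<0}} f̂₋(x) v₀(x) dx, where f̌₊(x) = liminf_{s→+∞} f(x,s) and f̂₋(x) = limsup_{s→-∞} f(x,s). -/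
open MeasureTheory Filter Set

open Topology

lemma aux_liminf_mul_pos {a b : ℕ → ℝ} {C c : ℝ} (hC : ∀ m, |a m| ≤ C)
    (hb : Tendsto b atTop (𝓝 c)) (hc : 0 < c) :
    c * liminf a atTop ≤ liminf (fun m => a m * b m) atTop := by
  have hC0 : 0 ≤ C := (abs_nonneg _).trans (hC 0)
  have hbddA : IsBoundedUnder (· ≤ ·) atTop a := isBoundedUnder_of ⟨C, fun m => (le_abs_self _).trans (hC m)⟩
  have hbddA' : IsBoundedUnder (· ≥ ·) atTop a := isBoundedUnder_of ⟨-C, fun m => neg_le_of_abs_le (hC m)⟩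
  have hcobA : IsCoboundedUnder (· ≥ ·) atTop a := hbddA.isCoboundedUnder_ge
  have hbbd : ∀ᶠ m in atTop, |b m| ≤ |c| + 1 := by
    have := hb.abs.eventually (ge_mem_nhds (lt_add_one |c|))
    exact this
  have hbddAB : IsBoundedUnder (· ≥ ·) atTop (fun m => a m * b m) := by
    refine ⟨-(C * (|c| + 1)), eventually_map.2 (hbbd.mono fun m hm => ?_)⟩
    have h1 : |a m * b m| ≤ C * (|c| + 1) := by
      rw [abs_mul]; exact mul_le_mul (hC m) hm (abs_nonneg _) hC0
    simpa using neg_le_of_abs_le h1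
  have hcobAB : IsCoboundedUnder (· ≥ ·) atTop (fun m => a m * b m) := by
    refine IsBoundedUnder.isCoboundedUnder_ge ⟨C * (|c| + 1), eventually_map.2 (hbbd.mono fun m hm => ?_)⟩
    have h1 : |a m * b m| ≤ C * (|c| + 1) := by
      rw [abs_mul]; exact mul_le_mul (hC m) hm (abs_nonneg _) hC0
    exact (le_abs_self _).trans h1
  set l := liminf a atTop with hl
  refine le_of_forall_pos_le_add fun ε hε => ?_
  set δ := ε / (c + C + 1) with hδdef
  have hδpos : 0 < δ := div_pos hε (by linarith)
  have hev1 : ∀ᶠ m in atTop, l - δ < a m :=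
    eventually_lt_of_lt_liminf (by linarith) hbddA'
  have hev2 : ∀ᶠ m in atTop, |b m - c| < δ := by
    have := hb.sub_const c
    simpa [Real.dist_eq] using (Metric.tendsto_nhds.mp this δ hδpos)
  have hkey : ∀ᶠ m in atTop, c * l - ε ≤ a m * b m := by
    filter_upwards [hev1, hev2] with m h1 h2
    have hac : (l - δ) * c ≤ a m * c := mul_le_mul_of_nonneg_right h1.le hc.le
    have habs : |a m * (b m - c)| ≤ C * δ := by
      rw [abs_mul]; exact mul_le_mul (hC m) h2.le (abs_nonneg _) hC0
    have h3 : a m * b m = a m * c + a m * (b m - c) := by ring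
    have h4 : -(C * δ) ≤ a m * (b m - c) := neg_le_of_abs_le habs
    have h5 : δ * (c + C) ≤ ε := by
      rw [hδdef]
      rw [div_mul_eq_mul_div, div_le_iff₀ (by linarith : (0:ℝ) < c + C + 1)]
      nlinarith
    nlinarith
  have := le_liminf_of_le hcobAB hkey
  linarith [this]

lemma aux_liminf_mul_neg {a b : ℕ → ℝ} {C c : ℝ} (hC : ∀ m, |a m| ≤ C)
    (hb : Tendsto b atTop (𝓝 c)) (hc : c < 0) :
    c * limsup a atTop ≤ liminf (fun m => a m * b m) atTop := by
  have h1 : (-c) * liminf (fun m => -a m) atTop ≤ liminf (fun m => (-a m) * (-b m)) atTop :=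
    aux_liminf_mul_pos (fun m => by simpa using hC m) (hb.neg) (by linarith)
  have h2 : liminf (fun m => -a m) atTop = -limsup a atTop := by
    have hbA : IsBoundedUnder (· ≤ ·) atTop a := isBoundedUnder_of ⟨C, fun m => (le_abs_self _).trans (hC m)⟩
    have hbA' : IsBoundedUnder (· ≥ ·) atTop a := isBoundedUnder_of ⟨-C, fun m => neg_le_of_abs_le (hC m)⟩
    have := Antitone.map_limsup_of_continuousAt (F := atTop) (f := fun r : ℝ => -r)
      (fun x y h => neg_le_neg h) a (continuous_neg.continuousAt)
      hbA hbA'.isCoboundedUnder_le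
    simp only [Function.comp_def] at this
    exact this.symm
  have h3 : (fun m => (-a m) * (-b m)) = fun m => a m * b m := by funext m; ring
  rw [h2, h3] at h1
  linarith

lemma aux_liminf_comp_ge {g : ℝ → ℝ} {C : ℝ} (hg : ∀ s, |g s| ≤ C) {u : ℕ → ℝ}
    (hu : Tendsto u atTop atTop) :
    liminf g atTop ≤ liminf (fun m => g (u m)) atTop := by
  have h1 : (fun m => g (u m)) = g ∘ u := rfl
  rw [h1, liminf_comp]
  refine liminf_le_liminf_of_le hu ?_ ?_
  · exact isBoundedUnder_of ⟨-C, fun s => neg_le_of_abs_le (hg s)⟩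
  · exact IsBoundedUnder.isCoboundedUnder_ge (isBoundedUnder_of ⟨C, fun s => (le_abs_self _).trans (hg s)⟩)

lemma aux_limsup_comp_le {g : ℝ → ℝ} {C : ℝ} (hg : ∀ s, |g s| ≤ C) {u : ℕ → ℝ}
    (hu : Tendsto u atTop atBot) :
    limsup (fun m => g (u m)) atTop ≤ limsup g atBot := by
  have h1 : (fun m => g (u m)) = g ∘ u := rfl
  rw [h1, limsup_comp]
  refine limsup_le_limsup_of_le hu ?_ ?_
  · exact IsBoundedUnder.isCoboundedUnder_le (isBoundedUnder_of ⟨-C, fun s => neg_le_of_abs_le (hg s)⟩)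
  · exact isBoundedUnder_of ⟨C, fun s => (le_abs_self _).trans (hg s)⟩

lemma aux_liminf_rat_eq {g : ℝ → ℝ} (hg : Continuous g) :
    liminf g atTop = liminf (fun q : ℚ => g (q : ℝ)) atTop := by
  rw [liminf_eq, liminf_eq]
  congr 1
  ext a
  simp only [Set.mem_setOf_eq, eventually_atTop]
  constructor
  · rintro ⟨M, hM⟩
    obtain ⟨q₀, hq₀⟩ := exists_rat_gt M
    exact ⟨q₀, fun q hq => hM q (le_trans hq₀.le (by exact_mod_cast hq))⟩
  · rintro ⟨q₀, hq₀⟩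
    refine ⟨(q₀ : ℝ), fun s hs => ?_⟩
    -- choose rationals qₙ ∈ (s, s + 1/(n+1))
    have hex : ∀ m : ℕ, ∃ q : ℚ, s < q ∧ (q : ℝ) < s + 1 / (m + 1) := by
      intro m
      refine exists_rat_btwn ?_
      have : (0:ℝ) < 1 / (m + 1) := by positivity
      linarith
    choose q hq1 hq2 using hex
    have htend : Tendsto (fun m : ℕ => (q m : ℝ)) atTop (𝓝 s) := by
      have h0 : Tendsto (fun m : ℕ => s + 1 / ((m : ℝ) + 1)) atTop (𝓝 s) := by
        have : Tendsto (fun m : ℕ => 1 / ((m : ℝ) + 1)) atTop (𝓝 0) := tendsto_one_div_add_atTop_nhds_zero_nat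
        simpa using tendsto_const_nhds.add this
      exact tendsto_of_tendsto_of_tendsto_of_le_of_le tendsto_const_nhds h0
        (fun m => (hq1 m).le) (fun m => (hq2 m).le)
    have : Tendsto (fun m : ℕ => g (q m)) atTop (𝓝 (g s)) := (hg.tendsto s).comp htend
    refine ge_of_tendsto this (Eventually.of_forall fun m => ?_)
    refine hq₀ (q m) ?_
    have : (q₀ : ℝ) ≤ (q m : ℝ) := le_trans hs (hq1 m).le
    exact_mod_cast this

lemma aux_limsup_rat_eq {g : ℝ → ℝ} (hg : Continuous g) :
    limsup g atBot = limsup (fun q : ℚ => g (q : ℝ)) atBot := by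
  rw [limsup_eq, limsup_eq]
  congr 1
  ext a
  simp only [Set.mem_setOf_eq, eventually_atBot]
  constructor
  · rintro ⟨M, hM⟩
    obtain ⟨q₀, hq₀⟩ := exists_rat_lt M
    exact ⟨q₀, fun q hq => hM q (le_trans (by exact_mod_cast hq) hq₀.le)⟩
  · rintro ⟨q₀, hq₀⟩
    refine ⟨(q₀ : ℝ), fun s hs => ?_⟩
    have hex : ∀ m : ℕ, ∃ q : ℚ, s - 1 / (m + 1) < q ∧ (q : ℝ) < s := by
      intro m
      exact exists_rat_btwn (by
        have : (0:ℝ) < 1 / (m + 1) := by positivity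
        linarith)
    choose q hq1 hq2 using hex
    have htend : Tendsto (fun m : ℕ => (q m : ℝ)) atTop (𝓝 s) := by
      have h0 : Tendsto (fun m : ℕ => s - 1 / ((m : ℝ) + 1)) atTop (𝓝 s) := by
        have : Tendsto (fun m : ℕ => 1 / ((m : ℝ) + 1)) atTop (𝓝 0) := tendsto_one_div_add_atTop_nhds_zero_nat
        simpa using tendsto_const_nhds.sub this
      exact tendsto_of_tendsto_of_tendsto_of_le_of_le h0 tendsto_const_nhds
        (fun m => (hq1 m).le) (fun m => (hq2 m).le)
    have : Tendsto (fun m : ℕ => g (q m)) atTop (𝓝 (g s)) := (hg.tendsto s).comp htend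
    refine le_of_tendsto this (Eventually.of_forall fun m => ?_)
    refine hq₀ (q m) ?_
    have : (q m : ℝ) ≤ (q₀ : ℝ) := le_trans (hq2 m).le hs
    exact_mod_cast this

lemma aux_fatou_real {α : Type*} [MeasurableSpace α] {μ : Measure α}
    (g : ℕ → α → ℝ) (G b : α → ℝ)
    (hb : Integrable b μ) (hG : Integrable G μ)
    (hgm : ∀ m, AEStronglyMeasurable (g m) μ)
    (hgb : ∀ m, ∀ᵐ x ∂μ, |g m x| ≤ b x)
    (hGb : ∀ᵐ x ∂μ, |G x| ≤ b x)
    (hle : ∀ᵐ x ∂μ, G x ≤ liminf (fun m => g m x) atTop) :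
    ∫ x, G x ∂μ ≤ liminf (fun m => ∫ x, g m x ∂μ) atTop := by
  have hgint : ∀ m, Integrable (g m) μ := fun m =>
    hb.mono (hgm m) ((hgb m).mono fun x h => by
      simpa [Real.norm_eq_abs] using h.trans (le_abs_self _))
  have hball : ∀ᵐ x ∂μ, ∀ m, |g m x| ≤ b x := ae_all_iff.2 hgb
  -- the shifted functions
  have hHnn : 0 ≤ᵐ[μ] fun x => G x + b x := hGb.mono fun x h => by
    have := neg_le_of_abs_le h; simp only [Pi.zero_apply]; linarith
  have hhnn : ∀ m, 0 ≤ᵐ[μ] fun x => g m x + b x := fun m => (hgb m).mono fun x h => by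
    have := neg_le_of_abs_le h; simp only [Pi.zero_apply]; linarith
  have hHint : Integrable (fun x => G x + b x) μ := hG.add hb
  have hhint : ∀ m, Integrable (fun x => g m x + b x) μ := fun m => (hgint m).add hb
  have key : ENNReal.ofReal (∫ x, (G x + b x) ∂μ)
      ≤ liminf (fun m => ENNReal.ofReal (∫ x, (g m x + b x) ∂μ)) atTop := by
    calc ENNReal.ofReal (∫ x, (G x + b x) ∂μ)
        = ∫⁻ x, ENNReal.ofReal (G x + b x) ∂μ :=
          ofReal_integral_eq_lintegral_ofReal hHint hHnn
      _ ≤ ∫⁻ x, liminf (fun m => ENNReal.ofReal (g m x + b x)) atTop ∂μ := by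
          refine lintegral_mono_ae ?_
          filter_upwards [hball, hGb, hle] with x hbx hGx hlex
          have hbdd : IsBoundedUnder (· ≥ ·) atTop (fun m => g m x) :=
            isBoundedUnder_of ⟨-b x, fun m => neg_le_of_abs_le (hbx m)⟩
          have hcob : IsCoboundedUnder (· ≥ ·) atTop (fun m => g m x) :=
            IsBoundedUnder.isCoboundedUnder_ge
              (isBoundedUnder_of ⟨b x, fun m => (le_abs_self _).trans (hbx m)⟩)
          have h1 : G x + b x ≤ liminf (fun m => g m x + b x) atTop := by
            rw [liminf_add_const atTop (fun m => g m x) (b x) hcob hbdd]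
            linarith
          have h2 : ENNReal.ofReal (liminf (fun m => g m x + b x) atTop)
              = liminf (fun m => ENNReal.ofReal (g m x + b x)) atTop := by
            have := Monotone.map_liminf_of_continuousAt (F := atTop)
              (f := ENNReal.ofReal) (fun _ _ h => ENNReal.ofReal_le_ofReal h)
              (fun m => g m x + b x) ENNReal.continuous_ofReal.continuousAt
              (IsBoundedUnder.isCoboundedUnder_ge
                (isBoundedUnder_of ⟨2 * b x, fun m => by
                  have h3 := (le_abs_self _).trans (hbx m); linarith⟩))
              (isBoundedUnder_of ⟨0, fun m => by
                  have h3 := neg_le_of_abs_le (hbx m); linarith⟩)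
            simpa [Function.comp_def] using this
          calc ENNReal.ofReal (G x + b x)
              ≤ ENNReal.ofReal (liminf (fun m => g m x + b x) atTop) :=
                ENNReal.ofReal_le_ofReal h1
            _ = _ := h2
      _ ≤ liminf (fun m => ∫⁻ x, ENNReal.ofReal (g m x + b x) ∂μ) atTop :=
          lintegral_liminf_le' fun m =>
            ((hgm m).aemeasurable.add hb.aemeasurable).ennreal_ofReal
      _ = liminf (fun m => ENNReal.ofReal (∫ x, (g m x + b x) ∂μ)) atTop := by
          apply liminf_congr
          refine Eventually.of_forall fun m => ?_
          exact (ofReal_integral_eq_lintegral_ofReal (hhint m) (hhnn m)).symm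
  -- bounds on the integrals
  have hintb : ∀ m, ∫ x, g m x ∂μ ≤ ∫ x, b x ∂μ := fun m =>
    integral_mono_ae (hgint m) hb ((hgb m).mono fun x h => (le_abs_self _).trans h)
  have hintb' : ∀ m, -∫ x, b x ∂μ ≤ ∫ x, g m x ∂μ := fun m => by
    have : ∫ x, (-b x) ∂μ ≤ ∫ x, g m x ∂μ :=
      integral_mono_ae hb.neg (hgint m) ((hgb m).mono fun x h => by
        have := neg_le_of_abs_le h; simpa using this)
    rwa [integral_neg] at this
  have hcobI : IsCoboundedUnder (· ≥ ·) atTop (fun m => ∫ x, g m x ∂μ) :=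
    IsBoundedUnder.isCoboundedUnder_ge (isBoundedUnder_of ⟨∫ x, b x ∂μ, hintb⟩)
  have hbddI : IsBoundedUnder (· ≥ ·) atTop (fun m => ∫ x, g m x ∂μ) :=
    isBoundedUnder_of ⟨-∫ x, b x ∂μ, hintb'⟩
  have hsum : ∀ m, ∫ x, (g m x + b x) ∂μ = (∫ x, g m x ∂μ) + ∫ x, b x ∂μ := fun m =>
    integral_add (hgint m) hb
  have hlift : liminf (fun m => ENNReal.ofReal (∫ x, (g m x + b x) ∂μ)) atTop
      = ENNReal.ofReal (liminf (fun m => ∫ x, (g m x + b x) ∂μ) atTop) := by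
    have := Monotone.map_liminf_of_continuousAt (F := atTop)
      (f := ENNReal.ofReal) (fun _ _ h => ENNReal.ofReal_le_ofReal h)
      (fun m => ∫ x, (g m x + b x) ∂μ) ENNReal.continuous_ofReal.continuousAt
      (IsBoundedUnder.isCoboundedUnder_ge (isBoundedUnder_of ⟨2 * ∫ x, b x ∂μ,
        fun m => by rw [hsum m]; have := hintb m; linarith⟩))
      (isBoundedUnder_of ⟨0, fun m => by rw [hsum m]; have := hintb' m; linarith⟩)
    simpa [Function.comp_def] using this.symm
  rw [hlift] at key
  have hlimnn : 0 ≤ liminf (fun m => ∫ x, (g m x + b x) ∂μ) atTop := by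
    refine le_liminf_of_le ?_ (Eventually.of_forall fun m => ?_)
    · exact IsBoundedUnder.isCoboundedUnder_ge (isBoundedUnder_of ⟨2 * ∫ x, b x ∂μ,
        fun m => by rw [hsum m]; have := hintb m; linarith⟩)
    · rw [hsum m]; have := hintb' m; linarith
  have key2 : ∫ x, (G x + b x) ∂μ ≤ liminf (fun m => ∫ x, (g m x + b x) ∂μ) atTop :=
    (ENNReal.ofReal_le_ofReal_iff hlimnn).mp key
  have hsplit : liminf (fun m => ∫ x, (g m x + b x) ∂μ) atTop
      = liminf (fun m => ∫ x, g m x ∂μ) atTop + ∫ x, b x ∂μ := by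
    have := liminf_add_const atTop (fun m => ∫ x, g m x ∂μ) (∫ x, b x ∂μ) hcobI hbddI
    rw [← this]
    exact liminf_congr (Eventually.of_forall fun m => hsum m)
  rw [hsplit, integral_add hG hb] at key2
  linarith

/-- Fatou-lemma estimate: if `vₙ → v₀` in `L²` and a.e. with an `L¹ ∩ L²` dominating
function `k`, `f` is continuous and bounded, and `μₙ → +∞`, then
`liminf ∫ f(x, μₙ vₙ(x)) vₙ(x) dx ≥ ∫_{v₀>0} f̌₊ v₀ + ∫_{v₀<0} f̂₋ v₀`,
where `f̌₊(x) = liminf_{s→+∞} f(x,s)` and `f̂₋(x) = limsup_{s→-∞} f(x,s)`. -/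
theorem fatou_landesman_lazer_estimate (n : ℕ)
    (v : ℕ → EuclideanSpace ℝ (Fin n) → ℝ) (v₀ : EuclideanSpace ℝ (Fin n) → ℝ)
    (k : EuclideanSpace ℝ (Fin n) → ℝ)
    (f : EuclideanSpace ℝ (Fin n) → ℝ → ℝ)
    (μ : ℕ → ℝ)
    (hv_meas : ∀ m, AEStronglyMeasurable (v m) (volume : Measure (EuclideanSpace ℝ (Fin n))))
    (hv₀_meas : AEStronglyMeasurable v₀ (volume : Measure (EuclideanSpace ℝ (Fin n))))
    (hL2conv : Tendsto (fun m => eLpNorm (fun x => v m x - v₀ x) 2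
      (volume : Measure (EuclideanSpace ℝ (Fin n)))) atTop (nhds 0))
    (hae : ∀ᵐ x ∂(volume : Measure (EuclideanSpace ℝ (Fin n))),
      Tendsto (fun m => v m x) atTop (nhds (v₀ x)))
    (hdom : ∀ m, ∀ᵐ x ∂(volume : Measure (EuclideanSpace ℝ (Fin n))), |v m x| ≤ k x)
    (hk1 : Integrable k (volume : Measure (EuclideanSpace ℝ (Fin n))))
    (hk2 : MemLp k 2 (volume : Measure (EuclideanSpace ℝ (Fin n))))
    (hf_cont : Continuous fun p : EuclideanSpace ℝ (Fin n) × ℝ => f p.1 p.2)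
    (hf_bdd : ∃ Cf : ℝ, ∀ x s, |f x s| ≤ Cf)
    (hμ : Tendsto μ atTop atTop) :
    (∫ x in {x : EuclideanSpace ℝ (Fin n) | 0 < v₀ x},
        (liminf (fun s => f x s) atTop) * v₀ x) +
      (∫ x in {x : EuclideanSpace ℝ (Fin n) | v₀ x < 0},
        (limsup (fun s => f x s) atBot) * v₀ x) ≤
    liminf (fun m => ∫ x, f x (μ m * v m x) * v m x) atTop := by
  obtain ⟨Cf, hCf⟩ := hf_bdd
  obtain ⟨C, hfC, hC0⟩ : ∃ C : ℝ, (∀ (x : (EuclideanSpace ℝ (Fin n))) (s : ℝ), |f x s| ≤ C) ∧ (0:ℝ) ≤ C :=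
    ⟨max Cf 0, fun x s => (hCf x s).trans (le_max_left _ _), le_max_right _ _⟩
  obtain ⟨w, hw_sm, hw_ae⟩ := hv₀_meas
  have hw_m : Measurable w := hw_sm.measurable
  -- continuity of sections
  have hsec : ∀ x : (EuclideanSpace ℝ (Fin n)), Continuous fun s : ℝ => f x s := fun x =>
    hf_cont.comp (continuous_const.prodMk continuous_id)
  set Fp : (EuclideanSpace ℝ (Fin n)) → ℝ := fun x => liminf (fun s : ℝ => f x s) atTop with hFpdef
  set Fm : (EuclideanSpace ℝ (Fin n)) → ℝ := fun x => limsup (fun s : ℝ => f x s) atBot with hFmdef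
  -- measurability of Fp, Fm via rationals
  have hbasis : (atTop : Filter ℚ).HasCountableBasis (fun _ : ℚ => True) Ici :=
    ⟨atTop_basis, Set.to_countable _⟩
  have hbasis' : (atBot : Filter ℚ).HasCountableBasis (fun _ : ℚ => True) Iic :=
    ⟨atBot_basis, Set.to_countable _⟩
  have hq_meas : ∀ q : ℚ, Measurable fun x : (EuclideanSpace ℝ (Fin n)) => f x (q : ℝ) := fun q =>
    (hf_cont.comp (continuous_id.prodMk continuous_const)).measurable
  have hFp_meas : Measurable Fp := by
    have h1 : Fp = fun x => liminf (fun q : ℚ => f x (q : ℝ)) atTop := by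
      funext x; exact aux_liminf_rat_eq (hsec x)
    rw [h1]
    exact Measurable.liminf' (f := fun (q : ℚ) (x : (EuclideanSpace ℝ (Fin n))) => f x (q : ℝ)) hq_meas hbasis
      (fun j => Set.to_countable _)
  have hFm_meas : Measurable Fm := by
    have h1 : Fm = fun x => limsup (fun q : ℚ => f x (q : ℝ)) atBot := by
      funext x; exact aux_limsup_rat_eq (hsec x)
    rw [h1]
    exact Measurable.limsup' (f := fun (q : ℚ) (x : (EuclideanSpace ℝ (Fin n))) => f x (q : ℝ)) hq_meas hbasis'
      (fun j => Set.to_countable _)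
  -- bounds on Fp, Fm
  have hFp_bdd : ∀ x, |Fp x| ≤ C := by
    intro x
    rw [abs_le]
    constructor
    · exact le_liminf_of_le
        (IsBoundedUnder.isCoboundedUnder_ge
          (isBoundedUnder_of ⟨C, fun s => (le_abs_self _).trans (hfC x s)⟩))
        (Eventually.of_forall fun s => neg_le_of_abs_le (hfC x s))
    · exact liminf_le_of_frequently_le
        (Frequently.of_forall fun s => (le_abs_self _).trans (hfC x s))
        (isBoundedUnder_of ⟨-C, fun s => neg_le_of_abs_le (hfC x s)⟩)
  have hFm_bdd : ∀ x, |Fm x| ≤ C := by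
    intro x
    rw [abs_le]
    constructor
    · exact le_limsup_of_frequently_le
        (Frequently.of_forall fun s => neg_le_of_abs_le (hfC x s))
        (isBoundedUnder_of ⟨C, fun s => (le_abs_self _).trans (hfC x s)⟩)
    · exact limsup_le_of_le
        (IsBoundedUnder.isCoboundedUnder_le
          (isBoundedUnder_of ⟨-C, fun s => neg_le_of_abs_le (hfC x s)⟩))
        (Eventually.of_forall fun s => (le_abs_self _).trans (hfC x s))
  -- a.e. facts
  have hdom_all : ∀ᵐ x ∂(volume : Measure (EuclideanSpace ℝ (Fin n))), ∀ m, |v m x| ≤ k x := ae_all_iff.2 hdom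
  have hk0 : ∀ᵐ x ∂(volume : Measure (EuclideanSpace ℝ (Fin n))), 0 ≤ k x :=
    (hdom 0).mono fun x h => (abs_nonneg _).trans h
  have hv₀k : ∀ᵐ x ∂(volume : Measure (EuclideanSpace ℝ (Fin n))), |v₀ x| ≤ k x := by
    filter_upwards [hae, hdom_all] with x hx hdx
    exact le_of_tendsto hx.abs (Eventually.of_forall hdx)
  have hwk : ∀ᵐ x ∂(volume : Measure (EuclideanSpace ℝ (Fin n))), |w x| ≤ k x := by
    filter_upwards [hv₀k, hw_ae] with x h1 h2
    rwa [h2] at h1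
  -- the indicator function L
  set Sp : Set (EuclideanSpace ℝ (Fin n)) := {x | 0 < w x} with hSpdef
  set Sm : Set (EuclideanSpace ℝ (Fin n)) := {x | w x < 0} with hSmdef
  have hSp_meas : MeasurableSet Sp := measurableSet_lt measurable_const hw_m
  have hSm_meas : MeasurableSet Sm := measurableSet_lt hw_m measurable_const
  set P : (EuclideanSpace ℝ (Fin n)) → ℝ := fun x => Fp x * w x with hPdef
  set Q : (EuclideanSpace ℝ (Fin n)) → ℝ := fun x => Fm x * w x with hQdef
  have hP_int : Integrable P (volume : Measure (EuclideanSpace ℝ (Fin n))) := by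
    refine (hk1.const_mul C).mono ((hFp_meas.mul hw_m).aestronglyMeasurable) ?_
    filter_upwards [hwk, hk0] with x h1 h2
    rw [Real.norm_eq_abs, Real.norm_eq_abs, abs_mul, abs_of_nonneg (mul_nonneg hC0 h2)]
    exact mul_le_mul (hFp_bdd x) h1 (abs_nonneg _) hC0
  have hQ_int : Integrable Q (volume : Measure (EuclideanSpace ℝ (Fin n))) := by
    refine (hk1.const_mul C).mono ((hFm_meas.mul hw_m).aestronglyMeasurable) ?_
    filter_upwards [hwk, hk0] with x h1 h2
    rw [Real.norm_eq_abs, Real.norm_eq_abs, abs_mul, abs_of_nonneg (mul_nonneg hC0 h2)]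
    exact mul_le_mul (hFm_bdd x) h1 (abs_nonneg _) hC0
  set L : (EuclideanSpace ℝ (Fin n)) → ℝ := fun x => Sp.indicator P x + Sm.indicator Q x with hLdef
  have hL_int : Integrable L (volume : Measure (EuclideanSpace ℝ (Fin n))) :=
    (hP_int.indicator hSp_meas).add (hQ_int.indicator hSm_meas)
  -- rewrite the LHS as ∫ L
  have hsetp : {x : (EuclideanSpace ℝ (Fin n)) | 0 < v₀ x} =ᵐ[volume] Sp := by
    refine eventuallyEq_set.2 ?_
    filter_upwards [hw_ae] with x hx
    simp [hSpdef, hx]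
  have hsetm : {x : (EuclideanSpace ℝ (Fin n)) | v₀ x < 0} =ᵐ[volume] Sm := by
    refine eventuallyEq_set.2 ?_
    filter_upwards [hw_ae] with x hx
    simp [hSmdef, hx]
  have hLHS1 : (∫ x in {x : (EuclideanSpace ℝ (Fin n)) | 0 < v₀ x}, Fp x * v₀ x) = ∫ x, Sp.indicator P x := by
    rw [Measure.restrict_congr_set hsetp, integral_indicator hSp_meas]
    refine integral_congr_ae (ae_restrict_of_ae ?_)
    filter_upwards [hw_ae] with x hx
    rw [hPdef, hx]
  have hLHS2 : (∫ x in {x : (EuclideanSpace ℝ (Fin n)) | v₀ x < 0}, Fm x * v₀ x) = ∫ x, Sm.indicator Q x := by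
    rw [Measure.restrict_congr_set hsetm, integral_indicator hSm_meas]
    refine integral_congr_ae (ae_restrict_of_ae ?_)
    filter_upwards [hw_ae] with x hx
    rw [hQdef, hx]
  have hLHS : (∫ x in {x : (EuclideanSpace ℝ (Fin n)) | 0 < v₀ x}, Fp x * v₀ x) +
      (∫ x in {x : (EuclideanSpace ℝ (Fin n)) | v₀ x < 0}, Fm x * v₀ x) = ∫ x, L x := by
    rw [hLHS1, hLHS2]
    exact (integral_add (hP_int.indicator hSp_meas) (hQ_int.indicator hSm_meas)).symm
  rw [hLHS]
  -- apply the real Fatou lemma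
  refine aux_fatou_real (fun m x => f x (μ m * v m x) * v m x) L (fun x => C * k x)
    (hk1.const_mul C) hL_int ?_ ?_ ?_ ?_
  · intro m
    have h1 : AEStronglyMeasurable (fun x : (EuclideanSpace ℝ (Fin n)) => (x, μ m * v m x)) volume :=
      aestronglyMeasurable_id.prodMk ((hv_meas m).const_mul (μ m))
    exact (hf_cont.comp_aestronglyMeasurable h1).mul (hv_meas m)
  · intro m
    filter_upwards [hdom m] with x hx
    rw [abs_mul]
    exact mul_le_mul (hfC x _) hx (abs_nonneg _) hC0
  · -- |L x| ≤ C * k x a.e.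
    filter_upwards [hwk, hk0] with x h1 h2
    have hPb : |P x| ≤ C * k x := by
      rw [hPdef, abs_mul]
      exact mul_le_mul (hFp_bdd x) h1 (abs_nonneg _) hC0
    have hQb : |Q x| ≤ C * k x := by
      rw [hQdef, abs_mul]
      exact mul_le_mul (hFm_bdd x) h1 (abs_nonneg _) hC0
    rcases lt_trichotomy (w x) 0 with hc | hc | hc
    · have : L x = Q x := by
        simp [hLdef, Set.indicator_apply, hSpdef, hSmdef, hc, not_lt.2 hc.le]
      rw [this]; exact hQb
    · have : L x = 0 := by
        simp [hLdef, Set.indicator_apply, hSpdef, hSmdef, hc]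
      rw [this]
      simpa using mul_nonneg hC0 h2
    · have : L x = P x := by
        simp [hLdef, Set.indicator_apply, hSpdef, hSmdef, hc, not_lt.2 hc.le]
      rw [this]; exact hPb
  · -- pointwise liminf estimate
    filter_upwards [hae, hdom_all, hw_ae] with x hx hdx hwx
    have hxw : Tendsto (fun m => v m x) atTop (𝓝 (w x)) := by rwa [hwx] at hx
    have ha : ∀ m, |f x (μ m * v m x)| ≤ C := fun m => hfC x _
    rcases lt_trichotomy (w x) 0 with hc | hc | hc
    · -- negative case
      have hL : L x = Fm x * w x := by
        simp [hLdef, Set.indicator_apply, hSpdef, hSmdef, hc, not_lt.2 hc.le, hQdef]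
      have hu : Tendsto (fun m => μ m * v m x) atTop atBot := hμ.atTop_mul_neg hc hxw
      have h1 : limsup (fun m => f x (μ m * v m x)) atTop ≤ Fm x :=
        aux_limsup_comp_le (hfC x) hu
      have h2 : w x * limsup (fun m => f x (μ m * v m x)) atTop ≤
          liminf (fun m => f x (μ m * v m x) * v m x) atTop :=
        aux_liminf_mul_neg ha hxw hc
      have h3 : w x * Fm x ≤ w x * limsup (fun m => f x (μ m * v m x)) atTop :=
        mul_le_mul_of_nonpos_left h1 hc.le
      rw [hL, mul_comm]
      linarith
    · -- zero case
      have hL : L x = 0 := by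
        simp [hLdef, Set.indicator_apply, hSpdef, hSmdef, hc]
      have htend : Tendsto (fun m => f x (μ m * v m x) * v m x) atTop (𝓝 0) := by
        have hb : Tendsto (fun m => C * |v m x|) atTop (𝓝 0) := by
          have := (hxw.abs).const_mul C
          rw [hc] at this
          simpa using this
        refine squeeze_zero_norm (fun m => ?_) hb
        rw [Real.norm_eq_abs, abs_mul]
        exact mul_le_mul_of_nonneg_right (hfC x _) (abs_nonneg _)
      rw [hL, htend.liminf_eq]
    · -- positive case
      have hL : L x = Fp x * w x := by
        simp [hLdef, Set.indicator_apply, hSpdef, hSmdef, hc, not_lt.2 hc.le, hPdef]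
      have hu : Tendsto (fun m => μ m * v m x) atTop atTop := hμ.atTop_mul_pos hc hxw
      have h1 : Fp x ≤ liminf (fun m => f x (μ m * v m x)) atTop :=
        aux_liminf_comp_ge (hfC x) hu
      have h2 : w x * liminf (fun m => f x (μ m * v m x)) atTop ≤
          liminf (fun m => f x (μ m * v m x) * v m x) atTop :=
        aux_liminf_mul_pos ha hxw hc
      have h3 : w x * Fp x ≤ w x * liminf (fun m => f x (μ m * v m x)) atTop :=
        mul_le_mul_of_nonneg_left h1 hc.le
      rw [hL, mul_comm]
      linarith
end
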